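/- Fix n ∈ ℕ and real structure constants f^{ab}_c with f^{ab}_c = −f^{ba}_c satisfying the Jacobi identity Σ_l (f^{kl}_i·f^{ja}_l + f^{jl}_i·f^{ak}_l + f^{al}_i·f^{kj}_l) = 0. Let γ : ℝⁿ → Matrix (Fin n) (Fin n) ℝ be continuously differentiable and satisfy the first master equation Σ_i (γ^j_i(A)·∂^i_A γ^k_l(A) − γ^k_i(A)·∂^i_A γ^j_l(A)) = Σ_i γ^i_l(A)·f^{jk}_i at every A ∈ ℝⁿ. Let T : ℝⁿ → ℝⁿ be a bijection which is twice continuously differentiable with continuously differentiable inverse, and define γ̃ : ℝⁿ → Matrix (Fin n) (Fin n) ℝ by γ̃^i_j(B) = Σ_k γ^i_k(T⁻¹(B))·(∂T_j/∂A_k)(T⁻¹(B)). Then γ̃ also satisfies the first master equation: Σ_i (γ̃^j_i(B)·∂^i_B γ̃^k_l(B) − γ̃^k_i(B)·∂^i_B γ̃^j_l(B)) = Σ_i γ̃^i_l(B)·f^{jk}_i at every B ∈ ℝⁿ. Moreover, if ρ : ℝⁿ → Matrix (Fin n) (Fin n) ℝ is continuously differentiable and satisfies the second master equation Σ_l (γ^j_l(A)·∂^l_A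 ρ^i_a(A) + ρ^l_a(A)·∂^i_A γ^j_l(A)) = 0 everywhere, then ρ̃ defined by ρ̃^i_a(B) = Σ_s (∂(T⁻¹)_s/∂B_i)(B)·ρ^s_a(T⁻¹(B)) satisfies the second master equation with γ replaced by γ̃. -/

import Mathlib

/-!
Read the rows `γ^j = (γ^j_i)_i` as vector fields on `ℝⁿ` and the columns of `ρ` as 1-forms
`ω_a = Σ_s ρ^s_a dA_s`. The first master equation says `[γ^j, γ^k] = f^{jk}_i γ^i`, the second
that the Lie derivatives `L_{γ^j} ω_a` vanish. With `S = T⁻¹`, which is `C²` by the inverse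
function theorem and satisfies `DS(B)⁻¹ = DT(S B)`, the fields `γ̃^j` and the forms `ρ̃` are the
pullbacks of `γ^j` and `ω_a` along `S`. Pullback along a `C²` map with invertible derivative
commutes with the Lie bracket, and hence also with the Lie derivative of 1-forms, because
`(L_V ω)(W) = V(ω(W)) - ω([V, W])`.
-/

/-- Partial derivative with respect to the `i`-th coordinate of a real-valued function
of `A ∈ ℝⁿ`. -/
noncomputable def pd {n : ℕ} (i : Fin n) (g : (Fin n → ℝ) → ℝ) (A : Fin n → ℝ) : ℝ :=
  fderiv ℝ g A (Pi.single i 1)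

open Function

section Diffeomorphism

variable {𝕜 : Type*} [NontriviallyNormedField 𝕜]
  {E : Type*} [NormedAddCommGroup E] [NormedSpace 𝕜 E]
  {F : Type*} [NormedAddCommGroup F] [NormedSpace 𝕜 F]
  {f : E → F} {g : F → E} {x : E}

theorem exists_continuousLinearEquiv_fderiv_of_leftInverse (hgf : LeftInverse g f)
    (hfg : RightInverse g f) (hf : DifferentiableAt 𝕜 f x)
    (hg : DifferentiableAt 𝕜 g (f x)) :
    ∃ e : E ≃L[𝕜] F, (e : E →L[𝕜] F) = fderiv 𝕜 f x ∧ (e.symm : F →L[𝕜] E) = fderiv 𝕜 g (f x) := by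
  have hgf' : (fderiv 𝕜 g (f x)).comp (fderiv 𝕜 f x) = .id 𝕜 E := by
    rw [← fderiv_comp x hg hf, hgf.comp_eq_id, fderiv_id]
  have hfg' : (fderiv 𝕜 f x).comp (fderiv 𝕜 g (f x)) = .id 𝕜 F := by
    have := fderiv_comp (f x) (hgf x ▸ hf) hg
    rwa [hfg.comp_eq_id, fderiv_id, hgf x, eq_comm] at this
  exact ⟨.equivOfInverse _ _ (fun v => congr($hgf' v)) (fun w => congr($hfg' w)), rfl, rfl⟩

theorem contDiff_of_leftInverse [CompleteSpace E] {n : WithTop ℕ∞} (hf : ContDiff 𝕜 n f)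
    (hn : n ≠ 0) (hg : Differentiable 𝕜 g) (hgf : LeftInverse g f) (hfg : RightInverse g f) :
    ContDiff 𝕜 n g := by
  have hfd := hf.differentiable hn
  choose e he _ using fun x => exists_continuousLinearEquiv_fderiv_of_leftInverse hgf hfg
    (hfd x) (hg (f x))
  let h : E ≃ₜ F := ⟨⟨f, g, hgf, hfg⟩, hf.continuous, hg.continuous⟩
  exact h.contDiff_symm (f₀' := e) (fun x => he x ▸ (hfd x).hasFDerivAt) hf

theorem VectorField.differentiableAt_pullback [CompleteSpace E] {V : F → F}
    (hV : DifferentiableAt 𝕜 V (f x)) (hf : ContDiffAt 𝕜 2 f x)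
    (hf' : (fderiv 𝕜 f x).IsInvertible) :
    DifferentiableAt 𝕜 (pullback 𝕜 f V) x := by
  rw [← differentiableWithinAt_univ] at hV ⊢
  rw [← contDiffWithinAt_univ] at hf
  rw [← fderivWithin_univ] at hf'
  rw [← pullbackWithin_univ]
  exact DifferentiableWithinAt.pullbackWithin hV hf hf' uniqueDiffOn_univ (Set.mem_univ x)
    (Set.mapsTo_univ _ _)

namespace OneForm

noncomputable def lieDeriv (V : E → E) (ω : E → E →L[𝕜] 𝕜) (x : E) : E →L[𝕜] 𝕜 :=
  fderiv 𝕜 ω x (V x) + (ω x).comp (fderiv 𝕜 V x)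

noncomputable def pullback (f : E → F) (ω : F → F →L[𝕜] 𝕜) (x : E) : E →L[𝕜] 𝕜 :=
  (ω (f x)).comp (fderiv 𝕜 f x)

theorem lieDeriv_apply {V W : E → E} {ω : E → E →L[𝕜] 𝕜}
    (hω : DifferentiableAt 𝕜 ω x) (hW : DifferentiableAt 𝕜 W x) :
    lieDeriv V ω x (W x)
      = fderiv 𝕜 (fun y => ω y (W y)) x (V x) - ω x (VectorField.lieBracket 𝕜 V W x) := by
  rw [fderiv_clm_apply hω hW]
  simp only [lieDeriv, VectorField.lieBracket, add_apply,
    ContinuousLinearMap.coe_comp, comp_apply, ContinuousLinearMap.flip_apply, map_sub]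
  abel

theorem differentiableAt_pullback {ω : F → F →L[𝕜] 𝕜}
    (hω : DifferentiableAt 𝕜 ω (f x)) (hf : ContDiffAt 𝕜 2 f x) :
    DifferentiableAt 𝕜 (pullback f ω) x :=
  (hω.comp x (hf.differentiableAt two_ne_zero)).clm_comp
    ((hf.fderiv_right (m := 1) le_rfl).differentiableAt one_ne_zero)

theorem pullback_lieDeriv [CompleteSpace E] {n : WithTop ℕ∞} {V : F → F}
    {ω : F → F →L[𝕜] 𝕜} (hn : minSmoothness 𝕜 2 ≤ n) (hf : ContDiffAt 𝕜 n f x)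
    (hf' : (fderiv 𝕜 f x).IsInvertible) (hV : DifferentiableAt 𝕜 V (f x))
    (hω : DifferentiableAt 𝕜 ω (f x)) :
    pullback f (lieDeriv V ω) x = lieDeriv (VectorField.pullback 𝕜 f V) (pullback f ω) x := by
  have hf2 : ContDiffAt 𝕜 2 f x := hf.of_le (le_minSmoothness.trans hn)
  obtain ⟨N, -, -, hN, -⟩ := exists_continuousLinearEquiv_fderiv_symm_eq hf2 hf'
  ext u
  -- Test both sides against the constant field `W = Df(x) u`, whose pullback takes the value `u`.
  set w := fderiv 𝕜 f x u
  set W : F → F := fun _ => w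
  set Z := VectorField.pullback 𝕜 f W
  have hZx : Z x = u := by
    obtain ⟨M, hM⟩ := hf'
    simp [Z, W, w, VectorField.pullback_eq_of_fderiv_eq hM, ← hM]
  have hωZ : (fun y => pullback f ω y (Z y)) =ᶠ[nhds x] fun y => ω (f y) w := by
    filter_upwards [hN] with y hy
    simp [pullback, Z, W, VectorField.fderiv_pullback f W y ⟨N y, hy⟩]
  have hωw : DifferentiableAt 𝕜 (fun z => ω z w) (f x) := hω.clm_apply (differentiableAt_const w)
  calc pullback f (lieDeriv V ω) x u
      = fderiv 𝕜 (fun z => ω z w) (f x) (V (f x))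
          - ω (f x) (VectorField.lieBracket 𝕜 V W (f x)) :=
        lieDeriv_apply hω (differentiableAt_const w)
    _ = fderiv 𝕜 (fun y => ω (f y) w) x (VectorField.pullback 𝕜 f V x)
          - ω (f x) (fderiv 𝕜 f x (VectorField.pullback 𝕜 f (VectorField.lieBracket 𝕜 V W) x)) := by
        rw [fderiv_fun_comp x hωw (hf2.differentiableAt two_ne_zero)]
        simp only [ContinuousLinearMap.coe_comp, comp_apply, VectorField.fderiv_pullback f _ x hf']
    _ = fderiv 𝕜 (fun y => pullback f ω y (Z y)) x (VectorField.pullback 𝕜 f V x)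
          - pullback f ω x (VectorField.lieBracket 𝕜 (VectorField.pullback 𝕜 f V) Z x) := by
        rw [hωZ.fderiv_eq, VectorField.pullback_lieBracket hn hf hV (differentiableAt_const w)]
        rfl
    _ = lieDeriv (VectorField.pullback 𝕜 f V) (pullback f ω) x u := by
        rw [← lieDeriv_apply (differentiableAt_pullback hω hf2)
          (VectorField.differentiableAt_pullback (differentiableAt_const w) hf2 hf')]
        exact congrArg _ hZx

end OneForm

end Diffeomorphism

theorem apply_eq_sum_mul_apply_single {ι R : Type*} [Fintype ι] [DecidableEq ι] [CommSemiring R]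
    [TopologicalSpace R] (φ : (ι → R) →L[R] R) (v : ι → R) :
    φ v = ∑ i, v i * φ (Pi.single i 1) := by
  conv_lhs => rw [pi_eq_sum_univ' v, map_sum]
  simp

section Coordinates

variable {n : ℕ} {x : Fin n → ℝ}

theorem fderiv_apply_eq_sum_pd (g : (Fin n → ℝ) → ℝ) (v : Fin n → ℝ) :
    fderiv ℝ g x v = ∑ i, v i * pd i g x :=
  apply_eq_sum_mul_apply_single _ v

theorem pd_apply {V : (Fin n → ℝ) → Fin n → ℝ} (hV : DifferentiableAt ℝ V x) (i l : Fin n) :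
    pd i (fun y => V y l) x = fderiv ℝ V x (Pi.single i 1) l := by
  rw [pd, fderiv_apply hV l]
  rfl

theorem fderiv_apply_apply_eq_sum_pd {V : (Fin n → ℝ) → Fin n → ℝ} (hV : DifferentiableAt ℝ V x)
    (v : Fin n → ℝ) (l : Fin n) :
    fderiv ℝ V x v l = ∑ i, v i * pd i (fun y => V y l) x := by
  rw [← fderiv_apply_eq_sum_pd, fderiv_apply hV l]
  rfl

theorem lieBracket_apply_eq_sum_pd {V W : (Fin n → ℝ) → Fin n → ℝ} (hV : DifferentiableAt ℝ V x)
    (hW : DifferentiableAt ℝ W x) (l : Fin n) :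
    VectorField.lieBracket ℝ V W x l
      = ∑ i, (V x i * pd i (fun y => W y l) x - W x i * pd i (fun y => V y l) x) := by
  simp only [VectorField.lieBracket, Pi.sub_apply, fderiv_apply_apply_eq_sum_pd hV,
    fderiv_apply_apply_eq_sum_pd hW, Finset.sum_sub_distrib]

end Coordinates

namespace OneForm

variable {n : ℕ} {x : Fin n → ℝ}

def ofColumn (ρ : (Fin n → ℝ) → Fin n → Fin n → ℝ) (a : Fin n) (x : Fin n → ℝ) :
    (Fin n → ℝ) →L[ℝ] ℝ :=
  ∑ s, ρ x s a • ContinuousLinearMap.proj s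

theorem ofColumn_apply_single (ρ : (Fin n → ℝ) → Fin n → Fin n → ℝ) (a i : Fin n) :
    ofColumn ρ a x (Pi.single i 1) = ρ x i a := by
  simp [ofColumn, Pi.single_apply]

theorem ofColumn_apply_single_eq_self (ω : Fin n → (Fin n → ℝ) → (Fin n → ℝ) →L[ℝ] ℝ) (a : Fin n) :
    ofColumn (fun y i a => ω a y (Pi.single i 1)) a = ω a := by
  ext y v
  simp [ofColumn, apply_eq_sum_mul_apply_single (ω a y) v, mul_comm]

theorem differentiable_ofColumn {ρ : (Fin n → ℝ) → Fin n → Fin n → ℝ}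
    (hρ : ∀ i j, Differentiable ℝ (fun y => ρ y i j)) (a : Fin n) :
    Differentiable ℝ (ofColumn ρ a) := by
  unfold ofColumn
  fun_prop

theorem lieDeriv_apply_single_eq_sum_pd {V : (Fin n → ℝ) → Fin n → ℝ}
    {ω : (Fin n → ℝ) → (Fin n → ℝ) →L[ℝ] ℝ} (hV : DifferentiableAt ℝ V x)
    (hω : DifferentiableAt ℝ ω x) (i : Fin n) :
    lieDeriv V ω x (Pi.single i 1) = ∑ l, (V x l * pd l (fun y => ω y (Pi.single i 1)) x
      + ω x (Pi.single l 1) * pd i (fun y => V y l) x) := by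
  have hωi : fderiv ℝ ω x (V x) (Pi.single i 1)
      = fderiv ℝ (fun y => ω y (Pi.single i 1)) x (V x) := by
    rw [fderiv_clm_apply hω (differentiableAt_const _)]
    simp
  rw [lieDeriv, add_apply, hωi, fderiv_apply_eq_sum_pd,
    ContinuousLinearMap.comp_apply, apply_eq_sum_mul_apply_single (ω x), ← Finset.sum_add_distrib]
  simp only [pd_apply hV, mul_comm]

theorem pullback_apply_single_eq_sum_pd {S : (Fin n → ℝ) → Fin n → ℝ} (hS : DifferentiableAt ℝ S x)
    (ω : (Fin n → ℝ) → (Fin n → ℝ) →L[ℝ] ℝ) (i : Fin n) :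
    pullback S ω x (Pi.single i 1) = ∑ s, pd i (fun y => S y s) x * ω (S x) (Pi.single s 1) := by
  rw [pullback, ContinuousLinearMap.comp_apply, apply_eq_sum_mul_apply_single (ω (S x))]
  simp only [pd_apply hS]

end OneForm

section MasterEquations

variable {n : ℕ}

def FirstMasterEquation (f : Fin n → Fin n → Fin n → ℝ)
    (γ : (Fin n → ℝ) → Fin n → Fin n → ℝ) : Prop :=
  ∀ A : Fin n → ℝ, ∀ j k l,
    ∑ i, (γ A j i * pd i (fun B => γ B k l) A - γ A k i * pd i (fun B => γ B j l) A)
      = ∑ i, γ A i l * f j k i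

def SecondMasterEquation (γ ρ : (Fin n → ℝ) → Fin n → Fin n → ℝ) : Prop :=
  ∀ A : Fin n → ℝ, ∀ i j a,
    ∑ l, (γ A j l * pd l (fun B => ρ B i a) A + ρ A l a * pd i (fun B => γ B j l) A) = 0

variable {f : Fin n → Fin n → Fin n → ℝ} {γ ρ : (Fin n → ℝ) → Fin n → Fin n → ℝ}
  {S : (Fin n → ℝ) → Fin n → ℝ}

theorem firstMasterEquation_iff (hγ : ∀ j, Differentiable ℝ (fun A => γ A j)) :
    FirstMasterEquation f γ ↔ ∀ A j k,
      VectorField.lieBracket ℝ (fun B => γ B j) (fun B => γ B k) A = ∑ i, f j k i • γ A i := by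
  refine forall_congr' fun A => forall₂_congr fun j k => ?_
  rw [funext_iff]
  refine forall_congr' fun l => ?_
  rw [lieBracket_apply_eq_sum_pd (hγ j A) (hγ k A)]
  simp [Finset.sum_apply, mul_comm]

theorem secondMasterEquation_iff (hγ : ∀ j, Differentiable ℝ (fun A => γ A j))
    (hρ : ∀ a, Differentiable ℝ (OneForm.ofColumn ρ a)) :
    SecondMasterEquation γ ρ ↔
      ∀ A j a, OneForm.lieDeriv (fun B => γ B j) (OneForm.ofColumn ρ a) A = 0 := by
  have key : ∀ A i j a, OneForm.lieDeriv (fun B => γ B j) (OneForm.ofColumn ρ a) A (Pi.single i 1)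
      = ∑ l, (γ A j l * pd l (fun B => ρ B i a) A + ρ A l a * pd i (fun B => γ B j l) A) := by
    intro A i j a
    rw [OneForm.lieDeriv_apply_single_eq_sum_pd (hγ j A) (hρ a A)]
    simp only [OneForm.ofColumn_apply_single]
  constructor
  · intro h A j a
    ext v
    rw [apply_eq_sum_mul_apply_single]
    simp [key, h A _ j a]
  · intro h A i j a
    rw [← key, h, zero_apply]

theorem firstMasterEquation_pullback (hS : ContDiff ℝ 2 S)
    (hS' : ∀ x, (fderiv ℝ S x).IsInvertible) (hγ : ∀ j, Differentiable ℝ (fun A => γ A j))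
    (h : FirstMasterEquation f γ) :
    FirstMasterEquation f (fun B j => VectorField.pullback ℝ S (fun A => γ A j) B) := by
  have hγS : ∀ j, Differentiable ℝ (VectorField.pullback ℝ S (fun A => γ A j)) := fun j x =>
    VectorField.differentiableAt_pullback (hγ j _) hS.contDiffAt (hS' x)
  rw [firstMasterEquation_iff hγ] at h
  rw [firstMasterEquation_iff hγS]
  intro B j k
  rw [← VectorField.pullback_lieBracket (by simp) hS.contDiffAt (hγ j _) (hγ k _),
    VectorField.pullback, h, map_sum]
  simp [VectorField.pullback]

theorem secondMasterEquation_pullback (hS : ContDiff ℝ 2 S)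
    (hS' : ∀ x, (fderiv ℝ S x).IsInvertible) (hγ : ∀ j, Differentiable ℝ (fun A => γ A j))
    (hρ : ∀ i j, Differentiable ℝ (fun A => ρ A i j)) (h : SecondMasterEquation γ ρ) :
    SecondMasterEquation (fun B j => VectorField.pullback ℝ S (fun A => γ A j) B)
      (fun B i a => OneForm.pullback S (OneForm.ofColumn ρ a) B (Pi.single i 1)) := by
  have hγS : ∀ j, Differentiable ℝ (VectorField.pullback ℝ S (fun A => γ A j)) := fun j x =>
    VectorField.differentiableAt_pullback (hγ j _) hS.contDiffAt (hS' x)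
  have hω := OneForm.differentiable_ofColumn hρ
  have hωS : ∀ a, Differentiable ℝ (OneForm.pullback S (OneForm.ofColumn ρ a)) := fun a x =>
    OneForm.differentiableAt_pullback (hω a _) hS.contDiffAt
  rw [secondMasterEquation_iff hγ hω] at h
  rw [secondMasterEquation_iff hγS (by simpa only [OneForm.ofColumn_apply_single_eq_self] using hωS)]
  intro B j a
  rw [OneForm.ofColumn_apply_single_eq_self (fun a => OneForm.pullback S (OneForm.ofColumn ρ a)),
    ← OneForm.pullback_lieDeriv (by simp) hS.contDiffAt (hS' B) (hγ j _) (hω a _)]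
  ext v
  simp [OneForm.pullback, h]

end MasterEquations

theorem seiberg_witten_transports_master_equations_general (n : ℕ)
    (f : Fin n → Fin n → Fin n → ℝ)
    (γ : (Fin n → ℝ) → Fin n → Fin n → ℝ)
    (hγC1 : ∀ i j, ContDiff ℝ 1 (fun A => γ A i j))
    (hmaster1 : ∀ A : Fin n → ℝ, ∀ j k l,
      ∑ i, (γ A j i * pd i (fun B => γ B k l) A - γ A k i * pd i (fun B => γ B j l) A)
        = ∑ i, γ A i l * f j k i)
    (T S : (Fin n → ℝ) → (Fin n → ℝ))
    (hTC2 : ContDiff ℝ 2 T)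
    (hSleft : Function.LeftInverse S T) (hSright : Function.RightInverse S T)
    (hSC1 : ContDiff ℝ 1 S)
    (γt : (Fin n → ℝ) → Fin n → Fin n → ℝ)
    (hγt : ∀ B i j, γt B i j = ∑ k, γ (S B) i k * pd k (fun A => T A j) (S B)) :
    (∀ B : Fin n → ℝ, ∀ j k l,
      ∑ i, (γt B j i * pd i (fun C => γt C k l) B - γt B k i * pd i (fun C => γt C j l) B)
        = ∑ i, γt B i l * f j k i) ∧
    (∀ ρ ρt : (Fin n → ℝ) → Fin n → Fin n → ℝ,
      (∀ i j, ContDiff ℝ 1 (fun A => ρ A i j)) →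
      (∀ A : Fin n → ℝ, ∀ i j a,
        ∑ l, (γ A j l * pd l (fun B => ρ B i a) A + ρ A l a * pd i (fun B => γ B j l) A) = 0) →
      (∀ B i a, ρt B i a = ∑ s, pd i (fun C => S C s) B * ρ (S B) s a) →
      (∀ B : Fin n → ℝ, ∀ i j a,
        ∑ l, (γt B j l * pd l (fun C => ρt C i a) B + ρt B l a * pd i (fun C => γt C j l) B)
          = 0)) := by
  have hS : ContDiff ℝ 2 S :=
    contDiff_of_leftInverse hTC2 two_ne_zero (hSC1.differentiable one_ne_zero) hSleft hSright
  have hDS := fun B => exists_continuousLinearEquiv_fderiv_of_leftInverse hSright hSleft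
    (hS.differentiable two_ne_zero B) (hTC2.differentiable two_ne_zero (S B))
  have hS' : ∀ B, (fderiv ℝ S B).IsInvertible := fun B =>
    let ⟨e, he, _⟩ := hDS B; ⟨e, he⟩
  have hγ : ∀ j, Differentiable ℝ (fun A => γ A j) := fun j =>
    (contDiff_pi.2 (hγC1 j)).differentiable one_ne_zero
  obtain rfl : γt = fun B j => VectorField.pullback ℝ S (fun A => γ A j) B := by
    funext B j l
    obtain ⟨e, he, hes⟩ := hDS B
    rw [hγt, VectorField.pullback, ← he, ContinuousLinearMap.inverse_equiv, hes,
      fderiv_apply_apply_eq_sum_pd (hTC2.differentiable two_ne_zero _)]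
  refine ⟨firstMasterEquation_pullback hS hS' hγ hmaster1, fun ρ ρt hρ hmaster2 hρt => ?_⟩
  obtain rfl : ρt = fun B i a => OneForm.pullback S (OneForm.ofColumn ρ a) B (Pi.single i 1) := by
    funext B i a
    rw [hρt, OneForm.pullback_apply_single_eq_sum_pd (hS.differentiable two_ne_zero B)]
    simp only [OneForm.ofColumn_apply_single]
  exact secondMasterEquation_pullback hS hS' hγ (fun i j => (hρ i j).differentiable one_ne_zero)
    hmaster2

/-- Seiberg–Witten maps preserve the master equations. If `γ` satisfies the
first master equation for antisymmetric structure constants `f` obeying the Jacobi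
identity, `T : ℝⁿ → ℝⁿ` is a `C²` bijection with `C¹` inverse `S`, and
`γ̃^i_j(B) = Σ_k γ^i_k(S B)(∂T_j/∂A_k)(S B)`, then `γ̃` satisfies the first master
equation; moreover, if a `C¹` map `ρ` satisfies the second master equation with `γ`,
then `ρ̃^i_a(B) = Σ_s (∂S_s/∂B_i)(B) ρ^s_a(S B)` satisfies it with `γ̃`. -/
theorem seiberg_witten_transports_master_equations (n : ℕ)
    (f : Fin n → Fin n → Fin n → ℝ)
    (hanti : ∀ a b c, f a b c = - f b a c)
    (hjac : ∀ i j k a, ∑ l, (f k l i * f j a l + f j l i * f a k l + f a l i * f k j l) = 0)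
    (γ : (Fin n → ℝ) → Fin n → Fin n → ℝ)
    (hγC1 : ∀ i j, ContDiff ℝ 1 (fun A => γ A i j))
    (hmaster1 : ∀ A : Fin n → ℝ, ∀ j k l,
      ∑ i, (γ A j i * pd i (fun B => γ B k l) A - γ A k i * pd i (fun B => γ B j l) A)
        = ∑ i, γ A i l * f j k i)
    (T S : (Fin n → ℝ) → (Fin n → ℝ))
    (hTbij : Function.Bijective T)
    (hTC2 : ContDiff ℝ 2 T)
    (hSleft : Function.LeftInverse S T) (hSright : Function.RightInverse S T)
    (hSC1 : ContDiff ℝ 1 S)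
    (γt : (Fin n → ℝ) → Fin n → Fin n → ℝ)
    (hγt : ∀ B i j, γt B i j = ∑ k, γ (S B) i k * pd k (fun A => T A j) (S B)) :
    (∀ B : Fin n → ℝ, ∀ j k l,
      ∑ i, (γt B j i * pd i (fun C => γt C k l) B - γt B k i * pd i (fun C => γt C j l) B)
        = ∑ i, γt B i l * f j k i) ∧
    (∀ ρ ρt : (Fin n → ℝ) → Fin n → Fin n → ℝ,
      (∀ i j, ContDiff ℝ 1 (fun A => ρ A i j)) →
      (∀ A : Fin n → ℝ, ∀ i j a,
        ∑ l, (γ A j l * pd l (fun B => ρ B i a) A + ρ A l a * pd i (fun B => γ B j l) A) = 0) →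
      (∀ B i a, ρt B i a = ∑ s, pd i (fun C => S C s) B * ρ (S B) s a) →
      (∀ B : Fin n → ℝ, ∀ i j a,
        ∑ l, (γt B j l * pd l (fun C => ρt C i a) B + ρt B l a * pd i (fun C => γt C j l) B)
          = 0)) :=
  seiberg_witten_transports_master_equations_general n f γ hγC1 hmaster1 T S hTC2 hSleft hSright
    hSC1 γt hγt
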